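/- arXiv:1706.00513 — 3 statements merged into one kernel-verified Lean document; each statement's English description precedes it below -/
import Mathlib

section
/- Let Z_p⁻, Z_p⁺ > 0, α ≥ 0, and k_p = 1/(Z_p⁻ + Z_p⁺). Define the numerical fluxes T* = k_p (Z_p⁺ T⁻ + Z_p⁻ T⁺ − α Z_p⁻ Z_p⁺ (v⁻ − v⁺)) and v* = k_p (Z_p⁻ v⁻ + Z_p⁺ v⁺ − α (T⁻ − T⁺)). Then for all real v⁻, v⁺, T⁻, T⁺: (v⁻ − v⁺) T* + v* (T⁻ − T⁺) − v⁻ T⁻ + v⁺ T⁺ = −α k_p (Z_p⁻ Z_p⁺ (v⁻ − v⁺)² + (T⁻ − T⁺)²), which is nonpositive. -/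
theorem flux_energy_identity (Zm Zp a vm vp Tm Tp kp Tstar vstar : ℝ)
    (hZm : 0 < Zm) (hZp : 0 < Zp) (ha : 0 ≤ a)
    (hkp : kp = 1 / (Zm + Zp))
    (hT : Tstar = kp * (Zp * Tm + Zm * Tp - a * Zm * Zp * (vm - vp)))
    (hv : vstar = kp * (Zm * vm + Zp * vp - a * (Tm - Tp))) :
    (vm - vp) * Tstar + vstar * (Tm - Tp) - vm * Tm + vp * Tp
      = -a * kp * (Zm * Zp * (vm - vp) ^ 2 + (Tm - Tp) ^ 2)
    ∧ (vm - vp) * Tstar + vstar * (Tm - Tp) - vm * Tm + vp * Tp ≤ 0 := by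
  have hs : Zm + Zp ≠ 0 := by positivity
  have hkp0 : 0 ≤ kp := by rw [hkp]; positivity
  have heq : (vm - vp) * Tstar + vstar * (Tm - Tp) - vm * Tm + vp * Tp
      = -a * kp * (Zm * Zp * (vm - vp) ^ 2 + (Tm - Tp) ^ 2) := by
    subst hT hv hkp
    field_simp
    ring
  refine ⟨heq, heq ▸ ?_⟩
  have : 0 ≤ a * kp * (Zm * Zp * (vm - vp) ^ 2 + (Tm - Tp) ^ 2) := by positivity
  linarith
end

section
/- Suppose for each element e the operators satisfy stiffness consistency S_jᵉ 𝟙ᵉ = 0 and the discrete divergence theorem (S_jᵉ)ᵀ 𝟙ᵉ = Σ_{m∈Mᵉ} (P^{m,e})ᵀ W^m n_j^{m[e]}, and the numerical flux is consistent. Then if the discrete solution is constant (v_iᵉ = β_i 𝟙ᵉ, σ_{ij}ᵉ = α_{ij} 𝟙ᵉ for all e with α symmetric), the right-hand sides of the semi-discrete scheme M_ρᵉ dv_iᵉ/dt = −(S_jᵉ)ᵀ σ_{ij}ᵉ + Σ_m (P^{m,e})ᵀ W^m T_i^{*m[e]} and M_{S_{ijkl}}ᵉ dσ_{kl}ᵉ/dt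 = (1/2)(S_jᵉ v_iᵉ + S_iᵉ v_jᵉ) + Σ_m (P_{n_j}^{m,e})ᵀ W^m (v_i^{*m} − v_i^{m[e]}) vanish identically, so the constant state is preserved. -/
/-!
Projection consistency makes both mortar velocity states equal to `β i • 𝟙ᵐ`, and traction
consistency makes both mortar tractions equal to `∑ j, α i j • n_j`, so the consistent flux returns
exactly these states. In the stress equation the volume term vanishes by stiffness consistency and
the face term because `v* = v^{m[e]}`. In the momentum equation the discrete divergence theorem
turns `∑ j, S_jᵀ (α i j • 𝟙)` into the face sum of the signed traction `∑ j, α i j • n_j`, which is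
exactly the flux term.
-/

open Matrix

theorem Matrix.sum_mulVec_smul {R ι m : Type*} {n : ι → Type*} [CommSemiring R]
    [∀ e, Fintype (n e)] (s : Finset ι) (A : ∀ e, Matrix m (n e) R) (c : R) (v : ∀ e, n e → R) :
    ∑ e ∈ s, A e *ᵥ (c • v e) = c • ∑ e ∈ s, A e *ᵥ v e := by
  simp only [mulVec_smul, ← Finset.smul_sum]

theorem ite_neg_sum_smul {R V ι : Type*} [Ring R] [AddCommGroup V] [Module R V]
    (p : Prop) [Decidable p] (t : Finset ι) (c : ι → R) (x : ι → V) :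
    (if p then ∑ j ∈ t, c j • x j else -∑ j ∈ t, c j • x j)
      = ∑ j ∈ t, c j • (if p then x j else -x j) := by
  split_ifs <;> simp [smul_neg, Finset.sum_neg_distrib]

theorem sum_smul_sum_ite_neg {R V ι M : Type*} [CommRing R] [AddCommGroup V] [Module R V]
    {X : M → Type*} [∀ m, AddCommGroup (X m)] [∀ m, Module R (X m)]
    (s : Finset M) (p : M → Prop) [DecidablePred p] (L : ∀ m, X m →ₗ[R] V)
    (t : Finset ι) (c : ι → R) (x : ι → ∀ m, X m) :
    ∑ j ∈ t, c j • ∑ m ∈ s, L m (if p m then x j m else -x j m)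
      = ∑ m ∈ s, L m (if p m then ∑ j ∈ t, c j • x j m else -∑ j ∈ t, c j • x j m) := by
  simp_rw [ite_neg_sum_smul, map_sum, map_smul, Finset.smul_sum]
  exact Finset.sum_comm

theorem constant_state_preservation_general
    {E M : Type} [DecidableEq E]
    (n : E → ℕ) (nm : M → ℕ)
    (oneE : (e : E) → Fin (n e) → ℝ) (oneM : (m : M) → Fin (nm m) → ℝ)
    (S : (e : E) → Fin 3 → Matrix (Fin (n e)) (Fin (n e)) ℝ)
    (P : (m : M) → (e : E) → Matrix (Fin (nm m)) (Fin (n e)) ℝ)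
    (Pn : (m : M) → (e : E) → Fin 3 → Matrix (Fin (nm m)) (Fin (n e)) ℝ)
    (W : (m : M) → Matrix (Fin (nm m)) (Fin (nm m)) ℝ)
    (nvec : (m : M) → Fin 3 → Fin (nm m) → ℝ)
    (Eminus Eplus : M → Finset E) (Me : E → Finset M)
    (α : Fin 3 → Fin 3 → ℝ) (β : Fin 3 → ℝ)
    (hstiff : ∀ e j, S e j *ᵥ oneE e = 0)
    (hdiv : ∀ e j, (S e j)ᵀ *ᵥ oneE e =
      ∑ m ∈ Me e, (P m e)ᵀ *ᵥ (W m *ᵥ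
        (if e ∈ Eminus m then nvec m j else -(nvec m j))))
    (hproj : ∀ m, (∑ e ∈ Eminus m, P m e *ᵥ oneE e) = oneM m ∧
                  (∑ e ∈ Eplus m, P m e *ᵥ oneE e) = oneM m)
    (vminus vplus Tminus Tplus vstar Tstar : (m : M) → Fin 3 → Fin (nm m) → ℝ)
    (hvminus : ∀ m i, vminus m i = ∑ e ∈ Eminus m, P m e *ᵥ (β i • oneE e))
    (hvplus : ∀ m i, vplus m i = ∑ e ∈ Eplus m, P m e *ᵥ (β i • oneE e))
    (htrac : ∀ m i, Tminus m i = (fun p => ∑ j, α i j * nvec m j p) ∧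
                    Tplus m i = (fun p => ∑ j, α i j * nvec m j p))
    (hflux : ∀ m i, vminus m i = vplus m i → Tminus m i = Tplus m i →
      vstar m i = vminus m i ∧ Tstar m i = Tminus m i) :
    (∀ e i, -(∑ j, (S e j)ᵀ *ᵥ (α i j • oneE e))
        + ∑ m ∈ Me e, (P m e)ᵀ *ᵥ (W m *ᵥ
            (if e ∈ Eminus m then Tstar m i else -(Tstar m i))) = 0)
    ∧ (∀ e i j, (1 / 2 : ℝ) • (S e j *ᵥ (β i • oneE e) + S e i *ᵥ (β j • oneE e))
        + ∑ m ∈ Me e, (Pn m e j)ᵀ *ᵥ (W m *ᵥ (vstar m i -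
            (if e ∈ Eminus m then vminus m i else vplus m i))) = 0) := by
  have hv_eq : ∀ m i, vminus m i = vplus m i := fun m i => by
    rw [hvminus, hvplus, sum_mulVec_smul _ (P m), sum_mulVec_smul _ (P m), (hproj m).1,
      (hproj m).2]
  have hstar := fun m i => hflux m i (hv_eq m i) ((htrac m i).1.trans (htrac m i).2.symm)
  have hTstar : ∀ m i, Tstar m i = ∑ j, α i j • nvec m j := fun m i => by
    ext p
    simp [(hstar m i).2, (htrac m i).1, Finset.sum_apply]
  refine ⟨fun e i => neg_add_eq_zero.mpr ?_, fun e i j => ?_⟩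
  · simp_rw [mulVec_smul, hdiv, hTstar]
    exact sum_smul_sum_ite_neg _ _ (fun m => (P m e)ᵀ.mulVecLin ∘ₗ (W m).mulVecLin) _ _ _
  · have hface : ∀ m, vstar m i - (if e ∈ Eminus m then vminus m i else vplus m i) = 0 :=
      fun m => by split_ifs <;> simp [(hstar m i).1, hv_eq m i]
    simp [mulVec_smul, hstiff, hface]

theorem constant_state_preservation
    {E M : Type} [Fintype E] [Fintype M] [DecidableEq E] [DecidableEq M]
    (n : E → ℕ) (nm : M → ℕ)
    (oneE : (e : E) → Fin (n e) → ℝ) (oneM : (m : M) → Fin (nm m) → ℝ)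
    (S : (e : E) → Fin 3 → Matrix (Fin (n e)) (Fin (n e)) ℝ)
    (P : (m : M) → (e : E) → Matrix (Fin (nm m)) (Fin (n e)) ℝ)
    (Pn : (m : M) → (e : E) → Fin 3 → Matrix (Fin (nm m)) (Fin (n e)) ℝ)
    (W : (m : M) → Matrix (Fin (nm m)) (Fin (nm m)) ℝ)
    (nvec : (m : M) → Fin 3 → Fin (nm m) → ℝ)
    (Eminus Eplus : M → Finset E) (Me : E → Finset M)
    (hMe : ∀ e m, m ∈ Me e ↔ e ∈ Eminus m ∨ e ∈ Eplus m)
    (α : Fin 3 → Fin 3 → ℝ) (hα : ∀ i j, α i j = α j i) (β : Fin 3 → ℝ)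
    (hstiff : ∀ e j, S e j *ᵥ oneE e = 0)
    (hdiv : ∀ e j, (S e j)ᵀ *ᵥ oneE e =
      ∑ m ∈ Me e, (P m e)ᵀ *ᵥ (W m *ᵥ
        (if e ∈ Eminus m then nvec m j else -(nvec m j))))
    (hproj : ∀ m, (∑ e ∈ Eminus m, P m e *ᵥ oneE e) = oneM m ∧
                  (∑ e ∈ Eplus m, P m e *ᵥ oneE e) = oneM m)
    (vminus vplus Tminus Tplus vstar Tstar : (m : M) → Fin 3 → Fin (nm m) → ℝ)
    (hvminus : ∀ m i, vminus m i = ∑ e ∈ Eminus m, P m e *ᵥ (β i • oneE e))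
    (hvplus : ∀ m i, vplus m i = ∑ e ∈ Eplus m, P m e *ᵥ (β i • oneE e))
    (hTminus : ∀ m i, Tminus m i = ∑ e ∈ Eminus m, ∑ j, Pn m e j *ᵥ (α i j • oneE e))
    (hTplus : ∀ m i, Tplus m i = -∑ e ∈ Eplus m, ∑ j, Pn m e j *ᵥ (α i j • oneE e))
    (htrac : ∀ m i, Tminus m i = (fun p => ∑ j, α i j * nvec m j p) ∧
                    Tplus m i = (fun p => ∑ j, α i j * nvec m j p))
    (hflux : ∀ m i, vminus m i = vplus m i → Tminus m i = Tplus m i →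
      vstar m i = vminus m i ∧ Tstar m i = Tminus m i) :
    (∀ e i, -(∑ j, (S e j)ᵀ *ᵥ (α i j • oneE e))
        + ∑ m ∈ Me e, (P m e)ᵀ *ᵥ (W m *ᵥ
            (if e ∈ Eminus m then Tstar m i else -(Tstar m i))) = 0)
    ∧ (∀ e i j, (1 / 2 : ℝ) • (S e j *ᵥ (β i • oneE e) + S e i *ᵥ (β j • oneE e))
        + ∑ m ∈ Me e, (Pn m e j)ᵀ *ᵥ (W m *ᵥ (vstar m i -
            (if e ∈ Eminus m then vminus m i else vplus m i))) = 0) :=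
  constant_state_preservation_general n nm oneE oneM S P Pn W nvec Eminus Eplus Me α β hstiff hdiv
    hproj vminus vplus Tminus Tplus vstar Tstar hvminus hvplus htrac hflux
end

section
/- Under projection consistency (Σ_{e∈E^{−m}} P^{m,e} 𝟙ᵉ = Σ_{e∈E^{+m}} P^{m,e} 𝟙ᵉ = 𝟙^m), stiffness consistency (S_jᵉ 𝟙ᵉ = 0), and the discrete divergence theorem, the semi-discrete scheme conserves total momentum: Σ_{e∈E} (𝟙ᵉ)ᵀ M_ρᵉ dv_iᵉ/dt = 0, where the velocity equation is M_ρᵉ dv_iᵉ/dt = −(S_jᵉ)ᵀ σ_{ij}ᵉ + Σ_{m∈Mᵉ} (P^{m,e})ᵀ W^m T_i^{*m[e]} and T_i^{*m[e]} equals ±T_i^{*m} according as e is on the minus/plus side of m, with every mortar having at least one element on each side (periodic domain). -/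
open Matrix BigOperators

/-! Testing the stiffness term against the constant vector gives `σ ⬝ᵥ S 𝟙 = 0`, and testing a
mortar flux gives `(W T*) ⬝ᵥ P 𝟙`. Summed over all elements and regrouped by mortars, the two
sides of each mortar see the same projected constant `𝟙^m` with opposite signs of `T*`, so the
contributions cancel mortar by mortar. -/

theorem Finset.sum_union_ite_neg_dotProduct_eq_zero {ι k R : Type*} [Fintype k]
    [NonUnitalNonAssocRing R] [DecidableEq ι] {s t : Finset ι} (hst : Disjoint s t)
    {u : ι → k → R} (hu : ∑ e ∈ s, u e = ∑ e ∈ t, u e) (v : k → R) :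
    ∑ e ∈ s ∪ t, (if e ∈ s then v else -v) ⬝ᵥ u e = 0 := by
  have hs : ∑ e ∈ s, (if e ∈ s then v else -v) ⬝ᵥ u e = v ⬝ᵥ ∑ e ∈ s, u e := by
    rw [dotProduct_sum]
    exact Finset.sum_congr rfl fun e he => by rw [if_pos he]
  have ht : ∑ e ∈ t, (if e ∈ s then v else -v) ⬝ᵥ u e = -(v ⬝ᵥ ∑ e ∈ t, u e) := by
    rw [dotProduct_sum, ← Finset.sum_neg_distrib]
    exact Finset.sum_congr rfl fun e he => by
      rw [if_neg (Finset.disjoint_right.mp hst he), neg_dotProduct]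
  rw [Finset.sum_union hst, hs, ht, hu, add_neg_cancel]

theorem momentum_conservation_general
    {E M : Type} [Fintype E] [Fintype M] [DecidableEq E]
    (n : E → ℕ) (nm : M → ℕ)
    (oneE : (e : E) → Fin (n e) → ℝ) (oneM : (m : M) → Fin (nm m) → ℝ)
    (S : (e : E) → Fin 3 → Matrix (Fin (n e)) (Fin (n e)) ℝ)
    (P : (m : M) → (e : E) → Matrix (Fin (nm m)) (Fin (n e)) ℝ)
    (W : (m : M) → Matrix (Fin (nm m)) (Fin (nm m)) ℝ)
    (Eminus Eplus : M → Finset E)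
    (hdisj : ∀ m, Disjoint (Eminus m) (Eplus m))
    (Me : E → Finset M)
    (hMe : ∀ e m, m ∈ Me e ↔ e ∈ Eminus m ∨ e ∈ Eplus m)
    (hproj : ∀ m, (∑ e ∈ Eminus m, P m e *ᵥ oneE e) = oneM m ∧
                  (∑ e ∈ Eplus m, P m e *ᵥ oneE e) = oneM m)
    (hstiff : ∀ e j, S e j *ᵥ oneE e = 0)
    (Mρ : (e : E) → Matrix (Fin (n e)) (Fin (n e)) ℝ)
    (σ : (e : E) → Fin 3 → Fin 3 → Fin (n e) → ℝ)
    (Tstar : (m : M) → Fin 3 → Fin (nm m) → ℝ)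
    (dv : (e : E) → Fin 3 → Fin (n e) → ℝ)
    (hscheme : ∀ e i, Mρ e *ᵥ dv e i =
      -(∑ j, (S e j)ᵀ *ᵥ σ e i j)
      + ∑ m ∈ Me e, (P m e)ᵀ *ᵥ (W m *ᵥ
          (if e ∈ Eminus m then Tstar m i else -(Tstar m i)))) :
    ∀ i, ∑ e, oneE e ⬝ᵥ (Mρ e *ᵥ dv e i) = 0 := by
  intro i
  have h_flux : ∀ m e, W m *ᵥ (if e ∈ Eminus m then Tstar m i else -(Tstar m i)) =
      if e ∈ Eminus m then W m *ᵥ Tstar m i else -(W m *ᵥ Tstar m i) := fun m e => by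
    split_ifs <;> simp only [mulVec_neg]
  have h_element : ∀ e, oneE e ⬝ᵥ (Mρ e *ᵥ dv e i) = ∑ m ∈ Me e,
      (if e ∈ Eminus m then W m *ᵥ Tstar m i else -(W m *ᵥ Tstar m i)) ⬝ᵥ (P m e *ᵥ oneE e) := by
    intro e
    simp only [hscheme, dotProduct_add, dotProduct_neg, dotProduct_sum,
      dotProduct_transpose_mulVec, hstiff, dotProduct_zero, Finset.sum_const_zero, neg_zero,
      zero_add, h_flux]
  calc ∑ e, oneE e ⬝ᵥ (Mρ e *ᵥ dv e i)
      = ∑ m, ∑ e ∈ Eminus m ∪ Eplus m,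
          (if e ∈ Eminus m then W m *ᵥ Tstar m i else -(W m *ᵥ Tstar m i)) ⬝ᵥ
            (P m e *ᵥ oneE e) := by
        rw [Finset.sum_congr rfl fun e _ => h_element e]
        exact Finset.sum_comm' fun e m => by simp [hMe]
    _ = 0 := Finset.sum_eq_zero fun m _ =>
        Finset.sum_union_ite_neg_dotProduct_eq_zero (hdisj m)
          ((hproj m).1.trans (hproj m).2.symm) _

theorem momentum_conservation
    {E M : Type} [Fintype E] [Fintype M] [DecidableEq E] [DecidableEq M]
    (n : E → ℕ) (nm : M → ℕ)
    (oneE : (e : E) → Fin (n e) → ℝ) (oneM : (m : M) → Fin (nm m) → ℝ)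
    (S : (e : E) → Fin 3 → Matrix (Fin (n e)) (Fin (n e)) ℝ)
    (P : (m : M) → (e : E) → Matrix (Fin (nm m)) (Fin (n e)) ℝ)
    (W : (m : M) → Matrix (Fin (nm m)) (Fin (nm m)) ℝ)
    (nvec : (m : M) → Fin 3 → Fin (nm m) → ℝ)
    (Eminus Eplus : M → Finset E)
    (hdisj : ∀ m, Disjoint (Eminus m) (Eplus m))
    (hne : ∀ m, (Eminus m).Nonempty ∧ (Eplus m).Nonempty)
    (Me : E → Finset M)
    (hMe : ∀ e m, m ∈ Me e ↔ e ∈ Eminus m ∨ e ∈ Eplus m)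
    (hproj : ∀ m, (∑ e ∈ Eminus m, P m e *ᵥ oneE e) = oneM m ∧
                  (∑ e ∈ Eplus m, P m e *ᵥ oneE e) = oneM m)
    (hstiff : ∀ e j, S e j *ᵥ oneE e = 0)
    (hdiv : ∀ e j, (S e j)ᵀ *ᵥ oneE e =
      ∑ m ∈ Me e, (P m e)ᵀ *ᵥ (W m *ᵥ
        (if e ∈ Eminus m then nvec m j else -(nvec m j))))
    (Mρ : (e : E) → Matrix (Fin (n e)) (Fin (n e)) ℝ)
    (σ : (e : E) → Fin 3 → Fin 3 → Fin (n e) → ℝ)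
    (Tstar : (m : M) → Fin 3 → Fin (nm m) → ℝ)
    (dv : (e : E) → Fin 3 → Fin (n e) → ℝ)
    (hscheme : ∀ e i, Mρ e *ᵥ dv e i =
      -(∑ j, (S e j)ᵀ *ᵥ σ e i j)
      + ∑ m ∈ Me e, (P m e)ᵀ *ᵥ (W m *ᵥ
          (if e ∈ Eminus m then Tstar m i else -(Tstar m i)))) :
    ∀ i, ∑ e, oneE e ⬝ᵥ (Mρ e *ᵥ dv e i) = 0 :=
  momentum_conservation_general n nm oneE oneM S P W Eminus Eplus hdisj Me hMe hproj hstiff Mρ σ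
    Tstar dv hscheme
end
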